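/- Let ε = min_{i,g} v_i(g) > 0 and suppose m ≥ n ≥ 2. If there exist agents i ≠ j with e_j > (1/ε)·(v_j(G) − (m−1)ε)·(v_i(G) − ε + e_i), then for any allocation A and any good g ∈ A_j, moving g from A_j to A_i strictly increases Nash welfare; consequently no Nash-welfare-maximizing allocation gives agent j any good, while the centralized solution (maximizing ∑_i log v_i(A_i)) gives every agent at least one good, hence the centralized solution does not maximize Nash welfare. -/

import Mathlib

/-!
Moving a good `g` from agent `j` to agent `i` changes Nash welfare by
`log ((x + a) (y - b) / (x y))`, where `x, y` are the endowed bundle values of `i, j` and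
`a = v i g`, `b = v j g`. This is positive iff `b x < a (y - b)`. Every value is at least `ε`,
so `b ≤ v_j(G) - (m - 1) ε`, `x ≤ v_i(G) - ε + e_i` and `a (y - b) ≥ ε e_j`, and the gap
hypothesis is exactly what makes `b x < ε e_j`. Hence a Nash-welfare maximizer gives `j` nothing,
whereas the centralized solution gives `j` a good.
-/

open Finset

def bundleVal {n m : ℕ} (v : Fin n → Fin m → ℝ) (A : Fin m → Fin n) (i : Fin n) : ℝ :=
  ∑ g ∈ Finset.univ.filter (fun g => A g = i), v i g

noncomputable def NW {n m : ℕ} (v : Fin n → Fin m → ℝ) (e : Fin n → ℝ)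
    (A : Fin m → Fin n) : ℝ :=
  ∑ i, Real.log (bundleVal v A i + e i)

lemma Real.log_add_log_lt_log_add_log_of_mul_lt {x y a b : ℝ} (hx : 0 < x) (ha : 0 ≤ a)
    (hb : 0 ≤ b) (hyb : 0 < y - b) (h : b * x < a * (y - b)) :
    Real.log x + Real.log y < Real.log (x + a) + Real.log (y - b) := by
  have hy : 0 < y := by linarith
  rw [← Real.log_mul hx.ne' hy.ne', ← Real.log_mul (by positivity) hyb.ne']
  exact Real.log_lt_log (by positivity) (by nlinarith)

lemma Fintype.add_card_sub_one_mul_le_sum {α : Type*} [Fintype α] {f : α → ℝ} {ε : ℝ}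
    (hf : ∀ a, ε ≤ f a) (a : α) : f a + ((Fintype.card α : ℝ) - 1) * ε ≤ ∑ b, f b := by
  classical
  have hcard : ((univ.erase a).card : ℝ) = (Fintype.card α : ℝ) - 1 := by
    rw [card_erase_of_mem (mem_univ a), card_univ, Nat.cast_pred (Fintype.card_pos_iff.2 ⟨a⟩)]
  have := card_nsmul_le_sum (univ.erase a) f ε fun b _ => hf b
  rw [nsmul_eq_mul, hcard] at this
  rw [← add_sum_erase univ f (mem_univ a)]
  linarith

section bundleVal

variable {n m : ℕ} {v : Fin n → Fin m → ℝ} {A : Fin m → Fin n} {g : Fin m} {i j k : Fin n}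

lemma bundleVal_nonneg (hv : ∀ g, 0 ≤ v k g) : 0 ≤ bundleVal v A k :=
  sum_nonneg fun g _ => hv g

lemma bundleVal_le_sum (hv : ∀ g, 0 ≤ v k g) : bundleVal v A k ≤ ∑ g, v k g :=
  sum_le_sum_of_subset_of_nonneg (subset_univ _) fun g _ _ => hv g

lemma le_bundleVal (hv : ∀ g, 0 ≤ v k g) (hA : A g = k) : v k g ≤ bundleVal v A k :=
  single_le_sum (fun g _ => hv g) (by simpa using hA)

lemma bundleVal_update_add (A : Fin m → Fin n) (g : Fin m) (i k : Fin n) :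
    bundleVal v (Function.update A g i) k + (if A g = k then v k g else 0)
      = bundleVal v A k + (if i = k then v k g else 0) := by
  simp only [bundleVal, sum_filter]
  rw [Fintype.sum_eq_add_sum_compl g, Fintype.sum_eq_add_sum_compl g (fun g' => ite _ _ _),
    sum_congr rfl fun g' hg' => by
      rw [Function.update_of_ne (by simpa using hg')], Function.update_self]
  ring

lemma bundleVal_update_self (hA : A g ≠ i) :
    bundleVal v (Function.update A g i) i = bundleVal v A i + v i g := by
  simpa [hA] using bundleVal_update_add (v := v) A g i i

lemma bundleVal_update_of_eq (hA : A g = j) (hij : i ≠ j) :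
    bundleVal v (Function.update A g i) j = bundleVal v A j - v j g := by
  have := bundleVal_update_add (v := v) A g i j
  simp only [hA, hij, if_true, if_false, add_zero] at this
  linarith

lemma bundleVal_update_of_ne (hki : k ≠ i) (hkA : k ≠ A g) :
    bundleVal v (Function.update A g i) k = bundleVal v A k := by
  simpa [hkA.symm, hki.symm] using bundleVal_update_add (v := v) A g i k

end bundleVal

lemma NW_update_sub {n m : ℕ} (v : Fin n → Fin m → ℝ) (e : Fin n → ℝ) {A : Fin m → Fin n}
    {g : Fin m} {i j : Fin n} (hA : A g = j) (hij : i ≠ j) :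
    NW v e (Function.update A g i) - NW v e A
      = (Real.log (bundleVal v A i + e i + v i g) + Real.log (bundleVal v A j + e j - v j g))
        - (Real.log (bundleVal v A i + e i) + Real.log (bundleVal v A j + e j)) := by
  rw [NW, NW, ← sum_sub_distrib, Fintype.sum_eq_add i j hij fun k hk => by
    rw [bundleVal_update_of_ne hk.1 (hA ▸ hk.2), sub_self],
    bundleVal_update_self (by rw [hA]; exact hij.symm), bundleVal_update_of_eq hA hij,
    add_right_comm _ (v i g), sub_add_eq_add_sub (bundleVal v A j)]
  ring

theorem NW_lt_NW_update {n m : ℕ} {v : Fin n → Fin m → ℝ} {e : Fin n → ℝ} (he : ∀ i, 0 < e i)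
    {ε : ℝ} (hε : 0 < ε) (hv : ∀ k g, ε ≤ v k g) {i j : Fin n} (hij : i ≠ j)
    (hgap : e j > (1 / ε) * ((∑ g, v j g) - ((m : ℝ) - 1) * ε)
        * ((∑ g, v i g) - ε + e i))
    {A : Fin m → Fin n} {g : Fin m} (hA : A g = j) :
    NW v e A < NW v e (Function.update A g i) := by
  have hv0 : ∀ k g, 0 ≤ v k g := fun k g => hε.le.trans (hv k g)
  set x := bundleVal v A i + e i
  set y := bundleVal v A j + e j
  have hx : 0 < x := add_pos_of_nonneg_of_pos (bundleVal_nonneg (hv0 i)) (he i)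
  have hyb : e j ≤ y - v j g := by linarith [le_bundleVal (hv0 j) hA]
  have hb : v j g ≤ (∑ g, v j g) - ((m : ℝ) - 1) * ε := by
    simpa using le_sub_iff_add_le.2 (Fintype.add_card_sub_one_mul_le_sum (hv j) g)
  have hxle : x ≤ (∑ g, v i g) - ε + e i := by
    have := bundleVal_le_sum (A := Function.update A g i) (hv0 i)
    rw [bundleVal_update_self (by rw [hA]; exact hij.symm)] at this
    linarith [hv i g]
  have hgap' : ((∑ g, v j g) - ((m : ℝ) - 1) * ε) * ((∑ g, v i g) - ε + e i) < ε * e j := by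
    rwa [gt_iff_lt, mul_assoc, one_div, inv_mul_lt_iff₀ hε] at hgap
  have htransfer : v j g * x < v i g * (y - v j g) :=
    calc v j g * x ≤ ((∑ g, v j g) - ((m : ℝ) - 1) * ε) * ((∑ g, v i g) - ε + e i) :=
          mul_le_mul hb hxle hx.le ((hv0 j g).trans hb)
      _ < ε * e j := hgap'
      _ ≤ v i g * (y - v j g) := mul_le_mul (hv i g) hyb (he j).le (hv0 i g)
  have := Real.log_add_log_lt_log_add_log_of_mul_lt hx (hv0 i g) (hv0 j g)
    ((he j).trans_le hyb) htransfer
  linarith [NW_update_sub v e hA hij]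

theorem stmt6_general (n m : ℕ)
    (v : Fin n → Fin m → ℝ) (e : Fin n → ℝ) (he : ∀ i, 0 < e i)
    (ε : ℝ) (hε : 0 < ε)
    (hεmin : IsLeast (Set.range fun p : Fin n × Fin m => v p.1 p.2) ε)
    (i j : Fin n) (hij : i ≠ j)
    (hgap : e j > (1 / ε) * ((∑ g, v j g) - ((m : ℝ) - 1) * ε)
        * ((∑ g, v i g) - ε + e i)) :
    -- moving any good from j's bundle to i's bundle strictly increases Nash welfare
    (∀ (A : Fin m → Fin n) (g : Fin m), A g = j →
        NW v e A < NW v e (Function.update A g i)) ∧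
    -- no Nash-welfare-maximizing allocation gives agent j any good
    (∀ A : Fin m → Fin n, (∀ B, NW v e B ≤ NW v e A) → ∀ g, A g ≠ j) ∧
    -- the centralized solution (which, since `m ≥ n` and all values are positive,
    -- gives every agent at least one good) does not maximize Nash welfare
    (∀ ACEN : Fin m → Fin n,
        (∀ i' : Fin n, ∃ g, ACEN g = i') →
        (∀ A : Fin m → Fin n, (∀ i' : Fin n, ∃ g, A g = i') →
            ∑ i', Real.log (bundleVal v A i')
              ≤ ∑ i', Real.log (bundleVal v ACEN i')) →
        ¬ (∀ A : Fin m → Fin n, NW v e A ≤ NW v e ACEN)) := by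
  have hv : ∀ k g, ε ≤ v k g := fun k g => hεmin.2 ⟨(k, g), rfl⟩
  have improve : ∀ (A : Fin m → Fin n) (g : Fin m), A g = j →
      NW v e A < NW v e (Function.update A g i) :=
    fun _ _ hA => NW_lt_NW_update he hε hv hij hgap hA
  refine ⟨improve, fun A hmax g hA => (hmax _).not_gt (improve A g hA), ?_⟩
  intro ACEN hcover _ hmax
  obtain ⟨g, hg⟩ := hcover j
  exact (hmax _).not_gt (improve ACEN g hg)

theorem stmt6 (n m : ℕ) (hn : 2 ≤ n) (hm : n ≤ m)
    (v : Fin n → Fin m → ℝ) (e : Fin n → ℝ) (he : ∀ i, 0 < e i)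
    (ε : ℝ) (hε : 0 < ε)
    (hεmin : IsLeast (Set.range fun p : Fin n × Fin m => v p.1 p.2) ε)
    (i j : Fin n) (hij : i ≠ j)
    (hgap : e j > (1 / ε) * ((∑ g, v j g) - ((m : ℝ) - 1) * ε)
        * ((∑ g, v i g) - ε + e i)) :
    -- moving any good from j's bundle to i's bundle strictly increases Nash welfare
    (∀ (A : Fin m → Fin n) (g : Fin m), A g = j →
        NW v e A < NW v e (Function.update A g i)) ∧
    -- no Nash-welfare-maximizing allocation gives agent j any good
    (∀ A : Fin m → Fin n, (∀ B, NW v e B ≤ NW v e A) → ∀ g, A g ≠ j) ∧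
    -- the centralized solution (which, since `m ≥ n` and all values are positive,
    -- gives every agent at least one good) does not maximize Nash welfare
    (∀ ACEN : Fin m → Fin n,
        (∀ i' : Fin n, ∃ g, ACEN g = i') →
        (∀ A : Fin m → Fin n, (∀ i' : Fin n, ∃ g, A g = i') →
            ∑ i', Real.log (bundleVal v A i')
              ≤ ∑ i', Real.log (bundleVal v ACEN i')) →
        ¬ (∀ A : Fin m → Fin n, NW v e A ≤ NW v e ACEN)) :=
  stmt6_general n m v e he ε hε hεmin i j hij hgap
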